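/- arXiv:2106.14393 — 3 statements merged into one kernel-verified Lean document; each statement's English description precedes it below -/
import Mathlib

section
/- Let 𝓕^t, t ∈ Ω, be a parametrized family of C^1 IFSs on a common compact Z ⊂ ℝ^d satisfying conditions (C1) and (C2) and the generalized transversality condition (GTC) with respect to a locally finite Borel measure η on Ω, with associated constants δ_0 and function ψ. Let s be non-integral with 0 < s < d, let t_0 ∈ Ω and 0 < δ < δ_0. Then there is a constant c > 0, depending on s and δ (and t_0), such that for all distinct i, j ∈ Σ: ∫_{B(t_0,δ)} |Π^t(i) − Π^t(j)|^{−s} dη(t) ≤ c e^{|i∧j| ψ(δ)} ( max_{x∈Σ} φ^s(D_{Π^{t_0} x} f^{t_0}_{i∧j}) )^{−1}. -/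
open MeasureTheory Filter Set Metric
open scoped Topology ENNReal NNReal Matrix

noncomputable section

namespace IFSPaper

/-- `ℝ^d` with the Euclidean norm. -/
abbrev Euc (d : ℕ) : Type := EuclideanSpace ℝ (Fin d)

/-- The symbolic space `Σ = {1,…,ℓ}^ℕ`. -/
abbrev Seq (ℓ : ℕ) : Type := ℕ → Fin ℓ

abbrev Mat (d : ℕ) : Type := Matrix (Fin d) (Fin d) ℝ

/-- The left shift map `σ` on `Σ`. -/
def shiftMap {ℓ : ℕ} (x : Seq ℓ) : Seq ℓ := fun k => x (k + 1)

/-- The initial word `x|n` of a sequence `x`. -/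
def prefixWord {ℓ : ℕ} (x : Seq ℓ) (n : ℕ) : List (Fin ℓ) := List.ofFn fun k : Fin n => x k

/-- For a word `I = i₁…iₙ`, the composition `f_I = f_{i₁} ∘ ⋯ ∘ f_{iₙ}`. -/
def wordComp {ℓ : ℕ} {α : Type*} (f : Fin ℓ → α → α) : List (Fin ℓ) → α → α
  | [] => id
  | i :: w => f i ∘ wordComp f w

/-- The Jacobian matrix of `f_I` at `y`, computed from the Jacobians `Df` of the
individual maps via the chain rule. -/
def wordDeriv {ℓ d : ℕ} (f : Fin ℓ → Euc d → Euc d) (Df : Fin ℓ → Euc d → Mat d) :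
    List (Fin ℓ) → Euc d → Mat d
  | [], _ => 1
  | i :: w, y => Df i (wordComp f w y) * wordDeriv f Df w y

/-- The coding map `Π(x) = lim_n f_{x₁} ∘ ⋯ ∘ f_{xₙ} (0)` of an IFS. -/
def codingMap {ℓ d : ℕ} (f : Fin ℓ → Euc d → Euc d) (x : Seq ℓ) : Euc d :=
  limUnder atTop fun n => wordComp f (prefixWord x n) 0

/-- The singular values `α₁(A) ≥ α₂(A) ≥ … ≥ α_d(A)` of a `d × d` real matrix, in
decreasing order (indexed from `0`). -/
def singVals {d : ℕ} (A : Mat d) : Fin d → ℝ := fun k =>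
  let v : Fin d → ℝ := fun m =>
    Real.sqrt ((show (Aᵀ * A).IsHermitian from Matrix.isHermitian_conjTranspose_mul_self A).eigenvalues m)
  v (Tuple.sort v k.rev)

/-- The singular value function `φ^s(A)`. -/
def svf {d : ℕ} (s : ℝ) (A : Mat d) : ℝ :=
  if s < (d : ℝ) then
    ∏ k : Fin d,
      (if (k : ℕ) < ⌊s⌋₊ then singVals A k
       else if (k : ℕ) = ⌊s⌋₊ then singVals A k ^ (s - (⌊s⌋₊ : ℝ)) else 1)
  else |A.det| ^ (s / (d : ℝ))

/-- A matrix viewed as a continuous linear map on Euclidean space. -/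
def matCLM {d : ℕ} (A : Mat d) : Euc d →L[ℝ] Euc d := Matrix.toEuclideanCLM (𝕜 := ℝ) A

/-- The operator norm of a matrix (= its largest singular value). -/
def opNorm {d : ℕ} (A : Mat d) : ℝ := ‖matCLM A‖

/-- The quantity `Z^t_ω(r) = inf_{x ∈ Σ} min_{0 ≤ k ≤ d} r^k / φ^k(D_{Π x} f_ω)`. -/
def Zfun {ℓ d : ℕ} (f : Fin ℓ → Euc d → Euc d) (Df : Fin ℓ → Euc d → Mat d)
    (w : List (Fin ℓ)) (r : ℝ) : ℝ :=
  ⨅ x : Seq ℓ, ⨅ k : Fin (d + 1),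
    r ^ (k : ℕ) / svf ((k : ℕ) : ℝ) (wordDeriv f Df w (codingMap f x))

/-- The length `|i ∧ j|` of the common initial word of two sequences. -/
def commonLen {ℓ : ℕ} (i j : Seq ℓ) : ℕ := sInf {n | i n ≠ j n}

/-- The common initial word `i ∧ j` of two sequences. -/
def commonWord {ℓ : ℕ} (i j : Seq ℓ) : List (Fin ℓ) :=
  List.ofFn fun k : Fin (commonLen i j) => i k

/-- The generalized transversality condition for the parametrized family `F` of IFSs with
Jacobians `DF`, with parameters ranging in `Δ`, w.r.t. the measure `η`, witnessed by the
constant `δ₀` and the function `ψ`. -/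
def GTCWith {ℓ d : ℕ} {Ω : Type*} [PseudoMetricSpace Ω] [MeasurableSpace Ω]
    (F : Ω → Fin ℓ → Euc d → Euc d) (DF : Ω → Fin ℓ → Euc d → Mat d)
    (Δ : Set Ω) (η : Measure Ω) (δ₀ : ℝ) (ψ : ℝ → ℝ) : Prop :=
  0 < δ₀ ∧ (∀ δ ∈ Ioo (0 : ℝ) δ₀, 0 ≤ ψ δ) ∧
    Tendsto ψ (𝓝[>] (0 : ℝ)) (𝓝 0) ∧
    ∀ t₀ ∈ Δ, ∀ δ ∈ Ioo (0 : ℝ) δ₀, ∃ C : ℝ, 0 < C ∧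
      ∀ i j : Seq ℓ, i ≠ j → ∀ r : ℝ, 0 < r →
        η {t | t ∈ closedBall t₀ δ ∧
            dist (codingMap (F t) i) (codingMap (F t) j) < r} ≤
          ENNReal.ofReal (C * Real.exp ((commonLen i j : ℝ) * ψ δ) *
            Zfun (F t₀) (DF t₀) (commonWord i j) r)

/-- The generalized transversality condition (GTC). -/
def SatisfiesGTC {ℓ d : ℕ} {Ω : Type*} [PseudoMetricSpace Ω] [MeasurableSpace Ω]
    (F : Ω → Fin ℓ → Euc d → Euc d) (DF : Ω → Fin ℓ → Euc d → Mat d)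
    (Δ : Set Ω) (η : Measure Ω) : Prop :=
  ∃ δ₀ ψ, GTCWith F DF Δ η δ₀ ψ

/-- The conditions for `f` (with Jacobians `Df`) to be a `C¹` IFS on the compact set `Z`:
each map sends `Z` into itself and extends to a contracting `C¹` diffeomorphism of the
open set `U ⊇ Z` into itself. -/
def IsC1IFS {ℓ d : ℕ} (Z U : Set (Euc d)) (f : Fin ℓ → Euc d → Euc d)
    (Df : Fin ℓ → Euc d → Mat d) : Prop :=
  IsCompact Z ∧ Z.Nonempty ∧ IsOpen U ∧ Z ⊆ U ∧
  ∀ i : Fin ℓ,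
    MapsTo (f i) Z Z ∧ MapsTo (f i) U U ∧ InjOn (f i) U ∧
    (∀ x ∈ U, HasFDerivAt (f i) (matCLM (Df i x)) x) ∧
    ContinuousOn (fun x => matCLM (Df i x)) U ∧
    (∀ x ∈ U, IsUnit (Df i x).det) ∧
    ∃ ρ : ℝ, ρ < 1 ∧ ∀ x ∈ U, opNorm (Df i x) ≤ ρ

/-!
Split the values of `D(t) = |Π^t(i) − Π^t(j)|` into dyadic shells `[a 2ⁿ, a 2ⁿ⁺¹)`, `n ∈ ℤ`, where
`a = α_{k+1}`, `k = ⌊s⌋`, is a singular value of `D f_{i∧j}` at a point where `φ^s` is at least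
half its supremum. On a shell `D^{-s} ≤ (a 2ⁿ)^{-s}`, and the GTC bounds the measure of
`{D < a 2ⁿ⁺¹}` by `r^k / φ^k` for the shells with `n ≥ 0` and by
`r^{k+1} / φ^{k+1} = r^{k+1} / (φ^k a)` for the others. As `k < s < k + 1`, both halves of the
resulting series are geometric, and their sum is a constant times `1 / (φ^k a^{s-k}) = 1 / φ^s`.
-/

def dyadicConst (p q s : ℝ) : ℝ := 2 ^ p / (1 - 2 ^ (p - s)) + 2 ^ s / (1 - 2 ^ (s - q))

lemma dyadicConst_pos {p q s : ℝ} (hps : p < s) (hsq : s < q) : 0 < dyadicConst p q s := by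
  have h₁ : (2 : ℝ) ^ (p - s) < 1 := Real.rpow_lt_one_of_one_lt_of_neg one_lt_two (by linarith)
  have h₂ : (2 : ℝ) ^ (s - q) < 1 := Real.rpow_lt_one_of_one_lt_of_neg one_lt_two (by linarith)
  exact add_pos (div_pos (by positivity) (sub_pos.2 h₁)) (div_pos (by positivity) (sub_pos.2 h₂))

lemma ofReal_rpow_neg_le_tsum_indicator {a s : ℝ} (ha : 0 < a) (hs : 0 < s) (x : ℝ) :
    ENNReal.ofReal x ^ (-s) ≤ ∑' n : ℤ,
      (Iio (a * 2 ^ (n + 1))).indicator (fun _ => ENNReal.ofReal ((a * 2 ^ n) ^ (-s))) x := by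
  rcases le_or_gt x 0 with hx | hx
  · have hmem : ∀ n : ℤ, x ∈ Iio (a * 2 ^ (n + 1)) := fun n => hx.trans_lt (by positivity)
    simp only [indicator_of_mem (hmem _)]
    have hterm : ∀ m : ℕ,
        ENNReal.ofReal (a ^ (-s)) ≤ ENNReal.ofReal ((a * 2 ^ (-(m : ℤ))) ^ (-s)) := fun m => by
      refine ENNReal.ofReal_le_ofReal (Real.rpow_le_rpow_of_nonpos (by positivity) ?_ (by linarith))
      exact mul_le_of_le_one_right ha.le (zpow_le_one_of_nonpos₀ one_le_two (by omega))
    calc ENNReal.ofReal x ^ (-s) = ⊤ := by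
          rw [ENNReal.ofReal_of_nonpos hx, ENNReal.zero_rpow_of_neg (by linarith)]
      _ = ∑' _ : ℕ, ENNReal.ofReal (a ^ (-s)) :=
          (ENNReal.tsum_const_eq_top_of_ne_zero (by simp [Real.rpow_pos_of_pos ha])).symm
      _ ≤ ∑' m : ℕ, ENNReal.ofReal ((a * 2 ^ (-(m : ℤ))) ^ (-s)) := ENNReal.tsum_le_tsum hterm
      _ ≤ _ := ENNReal.tsum_comp_le_tsum_of_injective (fun m n h => by simpa using h)
          (fun n : ℤ => ENNReal.ofReal ((a * 2 ^ n) ^ (-s)))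
  · obtain ⟨n, hn_le, hn_lt⟩ := exists_mem_Ico_zpow (div_pos hx ha) one_lt_two
    have hlt : x < a * 2 ^ (n + 1) := by rwa [div_lt_iff₀' ha] at hn_lt
    have hle : a * 2 ^ n ≤ x := by rwa [le_div_iff₀' ha] at hn_le
    calc ENNReal.ofReal x ^ (-s) = ENNReal.ofReal (x ^ (-s)) := ENNReal.ofReal_rpow_of_pos hx
      _ ≤ ENNReal.ofReal ((a * 2 ^ n) ^ (-s)) :=
          ENNReal.ofReal_le_ofReal (Real.rpow_le_rpow_of_nonpos (by positivity) hle (by linarith))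
      _ = (Iio (a * 2 ^ (n + 1))).indicator (fun _ => ENNReal.ofReal ((a * 2 ^ n) ^ (-s))) x :=
          (indicator_of_mem (mem_Iio.2 hlt) (fun _ => _)).symm
      _ ≤ _ := ENNReal.le_tsum n

/- Measurable hulls of the `S n` make this hold without any measurability assumption. -/
lemma lintegral_le_tsum_mul_measure {α ι : Type*} [MeasurableSpace α] [Countable ι]
    (μ : Measure α) {f : α → ℝ≥0∞} (S : ι → Set α) (c : ι → ℝ≥0∞)
    (hf : ∀ t, f t ≤ ∑' n, (S n).indicator (fun _ => c n) t) :
    ∫⁻ t, f t ∂μ ≤ ∑' n, c n * μ (S n) := by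
  calc ∫⁻ t, f t ∂μ ≤ ∫⁻ t, ∑' n, (toMeasurable μ (S n)).indicator (fun _ => c n) t ∂μ :=
        lintegral_mono fun t => (hf t).trans <| ENNReal.tsum_le_tsum fun n =>
          indicator_le_indicator_of_subset (subset_toMeasurable μ _) (fun _ => zero_le) t
    _ = ∑' n, c n * μ (S n) := by
        rw [lintegral_tsum fun n =>
          (measurable_const.indicator (measurableSet_toMeasurable μ _)).aemeasurable]
        simp only [lintegral_indicator_const (measurableSet_toMeasurable μ _), measure_toMeasurable]

lemma tsum_ofReal_geometric {K r : ℝ} (hK : 0 ≤ K) (hr₀ : 0 ≤ r) (hr₁ : r < 1) :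
    ∑' m : ℕ, ENNReal.ofReal (K * r ^ m) = ENNReal.ofReal (K / (1 - r)) := by
  rw [← ENNReal.ofReal_tsum_of_nonneg (fun m => by positivity)
    ((summable_geometric_of_lt_one hr₀ hr₁).mul_left K), tsum_mul_left,
    tsum_geometric_of_lt_one hr₀ hr₁, div_eq_mul_inv]

lemma dyadic_shell_term {a s e M : ℝ} (ha : 0 < a) (x : ℝ) :
    (a * 2 ^ x) ^ (-s) * (M * (a * 2 ^ (x + 1) / a) ^ e)
      = M * a ^ (-s) * 2 ^ e * 2 ^ (x * (e - s)) := by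
  have h2 : (0 : ℝ) < 2 := two_pos
  rw [mul_div_cancel_left₀ _ ha.ne', Real.mul_rpow ha.le (by positivity), ← Real.rpow_mul h2.le,
    ← Real.rpow_mul h2.le]
  calc a ^ (-s) * 2 ^ (x * -s) * (M * 2 ^ ((x + 1) * e))
      = M * a ^ (-s) * (2 ^ (x * -s) * 2 ^ ((x + 1) * e)) := by ring
    _ = M * a ^ (-s) * (2 ^ e * 2 ^ (x * (e - s))) := by
        rw [← Real.rpow_add h2, ← Real.rpow_add h2]
        ring_nf
    _ = M * a ^ (-s) * 2 ^ e * 2 ^ (x * (e - s)) := by ring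

theorem lintegral_ofReal_rpow_neg_le {α : Type*} [MeasurableSpace α] (μ : Measure α) (D : α → ℝ)
    {p q s a M : ℝ} (hps : p < s) (hsq : s < q) (hs : 0 < s) (ha : 0 < a) (hM : 0 ≤ M)
    (hp : ∀ r, 0 < r → μ {t | D t < r} ≤ ENNReal.ofReal (M * (r / a) ^ p))
    (hq : ∀ r, 0 < r → μ {t | D t < r} ≤ ENNReal.ofReal (M * (r / a) ^ q)) :
    ∫⁻ t, ENNReal.ofReal (D t) ^ (-s) ∂μ ≤ ENNReal.ofReal (M * a ^ (-s) * dyadicConst p q s) := by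
  set c : ℤ → ℝ≥0∞ := fun n => ENNReal.ofReal ((a * 2 ^ n) ^ (-s))
  set S : ℤ → Set α := fun n => {t | D t < a * 2 ^ (n + 1)}
  have hshell : ∀ e, (∀ r, 0 < r → μ {t | D t < r} ≤ ENNReal.ofReal (M * (r / a) ^ e)) →
      ∀ n : ℤ, c n * μ (S n) ≤ ENNReal.ofReal (M * a ^ (-s) * 2 ^ e * 2 ^ ((n : ℝ) * (e - s))) := by
    intro e he n
    have hS := he (a * 2 ^ (n + 1)) (by positivity)
    calc c n * μ (S n) ≤ c n * ENNReal.ofReal (M * (a * 2 ^ (n + 1) / a) ^ e) := by gcongr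
      _ = _ := by
        rw [← ENNReal.ofReal_mul (by positivity), ← Real.rpow_intCast, ← Real.rpow_intCast,
          Int.cast_add, Int.cast_one, dyadic_shell_term ha]
  have h2 : (0 : ℝ) < 2 := two_pos
  have hr₁ : (2 : ℝ) ^ (p - s) < 1 := Real.rpow_lt_one_of_one_lt_of_neg one_lt_two (by linarith)
  have hr₂ : (2 : ℝ) ^ (s - q) < 1 := Real.rpow_lt_one_of_one_lt_of_neg one_lt_two (by linarith)
  calc ∫⁻ t, ENNReal.ofReal (D t) ^ (-s) ∂μ ≤ ∑' n, c n * μ (S n) :=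
        lintegral_le_tsum_mul_measure μ S c fun t => ofReal_rpow_neg_le_tsum_indicator ha hs (D t)
    _ = ∑' m : ℕ, c m * μ (S m) + ∑' m : ℕ, c (-(m + 1)) * μ (S (-(m + 1))) :=
        tsum_of_nat_of_neg_add_one ENNReal.summable ENNReal.summable
    _ ≤ ∑' m : ℕ, ENNReal.ofReal (M * a ^ (-s) * 2 ^ p * (2 ^ (p - s)) ^ m)
          + ∑' m : ℕ, ENNReal.ofReal (M * a ^ (-s) * 2 ^ s * (2 ^ (s - q)) ^ m) := by
        gcongr with m m
        · refine (hshell p hp m).trans_eq ?_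
          rw [Int.cast_natCast, mul_comm (m : ℝ), Real.rpow_mul_natCast h2.le]
        · refine (hshell q hq (-(m + 1))).trans_eq ?_
          rw [mul_assoc, ← Real.rpow_add h2, ← Real.rpow_mul_natCast h2.le, mul_assoc (_ * _),
            ← Real.rpow_add h2]
          push_cast
          ring_nf
    _ = ENNReal.ofReal (M * a ^ (-s) * dyadicConst p q s) := by
        rw [tsum_ofReal_geometric (by positivity) (by positivity) hr₁,
          tsum_ofReal_geometric (by positivity) (by positivity) hr₂,
          ← ENNReal.ofReal_add (div_nonneg (by positivity) (by linarith))
            (div_nonneg (by positivity) (by linarith)), dyadicConst]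
        ring_nf

section SingularValues

variable {d : ℕ}

lemma singVals_nonneg (A : Mat d) (k : Fin d) : 0 ≤ singVals A k := Real.sqrt_nonneg _

lemma opNorm_mul_le (A B : Mat d) : opNorm (A * B) ≤ opNorm A * opNorm B := by
  unfold opNorm matCLM
  rw [map_mul]
  exact norm_mul_le _ _

lemma opNorm_one_le : opNorm (1 : Mat d) ≤ 1 := by
  unfold opNorm matCLM
  rw [map_one]
  exact ContinuousLinearMap.norm_id_le

lemma eigenvalues_le_opNorm_sq (A : Mat d) (j : Fin d) :
    (show (Aᵀ * A).IsHermitian from Matrix.isHermitian_conjTranspose_mul_self A).eigenvalues j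
      ≤ opNorm A ^ 2 := by
  set hA := show (Aᵀ * A).IsHermitian from Matrix.isHermitian_conjTranspose_mul_self A
  have hv : ‖hA.eigenvectorBasis j‖ = 1 := hA.eigenvectorBasis.orthonormal.1 j
  set v : Euc d := hA.eigenvectorBasis j
  have hAv : matCLM (Aᴴ * A) v = hA.eigenvalues j • v := by
    apply WithLp.ofLp_injective
    rw [matCLM, Matrix.ofLp_toEuclideanCLM]
    simpa using hA.mulVec_eigenvectorBasis j
  have hnorm : ‖matCLM (Aᴴ * A)‖ = opNorm A ^ 2 := by
    rw [opNorm, matCLM, matCLM, map_mul, ← Matrix.star_eq_conjTranspose, map_star,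
      CStarRing.norm_star_mul_self (x := Matrix.toEuclideanCLM (𝕜 := ℝ) A), sq]
  calc hA.eigenvalues j ≤ ‖matCLM (Aᴴ * A) v‖ := by
        rw [hAv, norm_smul, hv, mul_one, Real.norm_eq_abs]
        exact le_abs_self _
    _ ≤ ‖matCLM (Aᴴ * A)‖ * ‖v‖ := (matCLM (Aᴴ * A)).le_opNorm v
    _ = opNorm A ^ 2 := by rw [hv, mul_one, hnorm]

lemma singVals_le_opNorm (A : Mat d) (k : Fin d) : singVals A k ≤ opNorm A :=
  (Real.sqrt_le_sqrt (eigenvalues_le_opNorm_sq A _)).trans_eq (Real.sqrt_sq (norm_nonneg _))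

lemma prod_singVals (A : Mat d) : ∏ k, singVals A k = |A.det| := by
  set hA := show (Aᵀ * A).IsHermitian from Matrix.isHermitian_conjTranspose_mul_self A
  set v : Fin d → ℝ := fun m => Real.sqrt (hA.eigenvalues m)
  have hperm : ∏ k, singVals A k = ∏ k, v k := by
    simpa [singVals] using Equiv.prod_comp (Fin.revPerm.trans (Tuple.sort v)) v
  have hsq : (∏ k, v k) ^ 2 = A.det ^ 2 := by
    have hv : ∀ k, v k ^ 2 = hA.eigenvalues k := fun k =>
      Real.sq_sqrt (Matrix.eigenvalues_conjTranspose_mul_self_nonneg A k)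
    rw [← Finset.prod_pow, Finset.prod_congr rfl fun k _ => hv k]
    have hdet : (Aᴴ * A).det = ∏ k, hA.eigenvalues k := by
      simpa using hA.det_eq_prod_eigenvalues
    rw [← hdet, Matrix.det_mul, Matrix.det_conjTranspose, star_trivial, sq]
  rw [hperm, ← Real.sqrt_sq (Finset.prod_nonneg fun k _ => Real.sqrt_nonneg _), hsq,
    Real.sqrt_sq_eq_abs]

lemma singVals_pos_of_det_ne_zero {A : Mat d} (hA : A.det ≠ 0) (k : Fin d) :
    0 < singVals A k := by
  have hprod : ∏ k, singVals A k ≠ 0 := by rw [prod_singVals]; exact abs_ne_zero.2 hA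
  exact (singVals_nonneg A k).lt_of_ne' (Finset.prod_ne_zero_iff.1 hprod k (Finset.mem_univ k))

end SingularValues

lemma prod_mul_eq_prod_mul_of_forall_ne {ι M : Type*} [Fintype ι] [DecidableEq ι] [CommMonoid M]
    {u v : ι → M} (k : ι) (h : ∀ j, j ≠ k → u j = v j) : (∏ j, u j) * v k = (∏ j, v j) * u k := by
  have hrest : ∏ j ∈ Finset.univ.erase k, u j = ∏ j ∈ Finset.univ.erase k, v j :=
    Finset.prod_congr rfl fun j hj => h j (Finset.ne_of_mem_erase hj)
  rw [← Finset.mul_prod_erase _ u (Finset.mem_univ k),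
    ← Finset.mul_prod_erase _ v (Finset.mem_univ k), hrest]
  ac_rfl

section SingularValueFunction

variable {d : ℕ}

lemma svf_natCast (A : Mat d) {m : ℕ} (hm : m ≤ d) :
    svf m A = ∏ j : Fin d, if (j : ℕ) < m then singVals A j else 1 := by
  unfold svf
  rcases hm.lt_or_eq with hmd | rfl
  · rw [if_pos (by exact_mod_cast hmd), Nat.floor_natCast]
    refine Finset.prod_congr rfl fun j _ => ?_
    split_ifs <;> simp_all
  · rw [if_neg (lt_irrefl _), ← prod_singVals]
    rcases Nat.eq_zero_or_pos m with rfl | hm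
    · simp
    · rw [div_self (by positivity), Real.rpow_one]
      exact Finset.prod_congr rfl fun j _ => (if_pos j.isLt).symm

lemma svf_succ (A : Mat d) {k : ℕ} (hk : k < d) :
    svf (k + 1 : ℕ) A = svf k A * singVals A ⟨k, hk⟩ := by
  rw [svf_natCast A hk, svf_natCast A hk.le]
  have := prod_mul_eq_prod_mul_of_forall_ne (⟨k, hk⟩ : Fin d)
    (u := fun j : Fin d => if (j : ℕ) < k + 1 then singVals A j else 1)
    (v := fun j : Fin d => if (j : ℕ) < k then singVals A j else 1) fun j hj => by
      have : (j : ℕ) ≠ k := fun h => hj (Fin.ext h)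
      by_cases hjk : (j : ℕ) < k <;> simp [hjk] <;> omega
  simpa using this

lemma svf_eq_mul_rpow_of_floor_eq (A : Mat d) {s : ℝ} {k : ℕ} (hsd : s < d) (hkd : k < d)
    (hk : ⌊s⌋₊ = k) : svf s A = svf k A * singVals A ⟨k, hkd⟩ ^ (s - k) := by
  subst hk
  rw [svf_natCast A hkd.le, svf, if_pos hsd]
  have := prod_mul_eq_prod_mul_of_forall_ne (⟨⌊s⌋₊, hkd⟩ : Fin d)
    (u := fun j : Fin d => if (j : ℕ) < ⌊s⌋₊ then singVals A j
      else if (j : ℕ) = ⌊s⌋₊ then singVals A j ^ (s - ⌊s⌋₊) else 1)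
    (v := fun j : Fin d => if (j : ℕ) < ⌊s⌋₊ then singVals A j else 1) fun j hj => by
      have : (j : ℕ) ≠ ⌊s⌋₊ := fun h => hj (Fin.ext h)
      simp [this]
  simpa using this

lemma svf_nonneg (s : ℝ) (A : Mat d) : 0 ≤ svf s A := by
  unfold svf
  split_ifs
  · refine Finset.prod_nonneg fun j _ => ?_
    split_ifs
    · exact singVals_nonneg A j
    · exact Real.rpow_nonneg (singVals_nonneg A j) _
    · exact zero_le_one
  · exact Real.rpow_nonneg (abs_nonneg _) _

lemma svf_pos {A : Mat d} (hA : A.det ≠ 0) (s : ℝ) : 0 < svf s A := by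
  have hσ := singVals_pos_of_det_ne_zero hA
  unfold svf
  split_ifs
  · refine Finset.prod_pos fun j _ => ?_
    split_ifs
    · exact hσ j
    · exact Real.rpow_pos_of_pos (hσ j) _
    · exact one_pos
  · exact Real.rpow_pos_of_pos (abs_pos.2 hA) _

lemma svf_le_one {s : ℝ} (hs : 0 ≤ s) {A : Mat d} (hA : opNorm A ≤ 1) : svf s A ≤ 1 := by
  have hσ : ∀ j, singVals A j ≤ 1 := fun j => (singVals_le_opNorm A j).trans hA
  unfold svf
  split_ifs
  · refine Finset.prod_le_one (fun j _ => ?_) fun j _ => ?_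
    · split_ifs
      · exact singVals_nonneg A j
      · exact Real.rpow_nonneg (singVals_nonneg A j) _
      · exact zero_le_one
    · split_ifs
      · exact hσ j
      · exact Real.rpow_le_one (singVals_nonneg A j) (hσ j) (by linarith [Nat.floor_le hs])
      · exact le_rfl
  · refine Real.rpow_le_one (abs_nonneg _) ?_ (by positivity)
    rw [← prod_singVals]
    exact Finset.prod_le_one (fun j _ => singVals_nonneg A j) fun j _ => hσ j

theorem lintegral_rpow_neg_le_div_svf {α : Type*} [MeasurableSpace α] (μ : Measure α) (D : α → ℝ)
    {B : Mat d} (hB : B.det ≠ 0) {s N : ℝ} {k : ℕ} (hks : k < s) (hsk : s < k + 1) (hsd : s < d)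
    (hN : 0 ≤ N)
    (hμ : ∀ m : ℕ, m ≤ d → ∀ r, 0 < r →
      μ {t | D t < r} ≤ ENNReal.ofReal (N * (r ^ m / svf m B))) :
    ∫⁻ t, ENNReal.ofReal (D t) ^ (-s) ∂μ ≤
      ENNReal.ofReal (N * dyadicConst k (k + 1) s / svf s B) := by
  have hs : 0 < s := lt_of_le_of_lt k.cast_nonneg hks
  have hkd : k < d := by exact_mod_cast hks.trans hsd
  have hfloor : ⌊s⌋₊ = k := (Nat.floor_eq_iff hs.le).2 ⟨hks.le, hsk⟩
  set a := singVals B ⟨k, hkd⟩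
  have ha : 0 < a := singVals_pos_of_det_ne_zero hB _
  have hφ : 0 < svf k B := svf_pos hB _
  have hrescale : ∀ (e : ℕ) (r : ℝ), r ^ e = a ^ e * (r / a) ^ (e : ℝ) := fun e r => by
    rw [Real.rpow_natCast, div_pow, mul_div_cancel₀ _ (by positivity)]
  have hp : ∀ r, 0 < r →
      μ {t | D t < r} ≤ ENNReal.ofReal (N * (a ^ k / svf k B) * (r / a) ^ (k : ℝ)) :=
    fun r hr => (hμ k hkd.le r hr).trans_eq <| by rw [hrescale k r]; ring_nf
  have hq : ∀ r, 0 < r →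
      μ {t | D t < r} ≤ ENNReal.ofReal (N * (a ^ k / svf k B) * (r / a) ^ ((k : ℝ) + 1)) :=
    fun r hr => (hμ (k + 1) hkd r hr).trans_eq <| by
      rw [hrescale (k + 1) r, svf_succ B hkd, pow_succ, Nat.cast_succ,
        show singVals B ⟨k, hkd⟩ = a from rfl]
      field_simp
  refine (lintegral_ofReal_rpow_neg_le μ D hks hsk hs ha (by positivity) hp hq).trans_eq ?_
  rw [svf_eq_mul_rpow_of_floor_eq B hsd hkd hfloor, Real.rpow_sub ha, Real.rpow_natCast,
    Real.rpow_neg ha.le]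
  field_simp

end SingularValueFunction

lemma exists_inv_le_two_mul_inv_ciSup {ι : Type*} {g : ι → ℝ} (hg : BddAbove (range g)) {i : ι}
    (hi : 0 < g i) : ∃ x, (g x)⁻¹ ≤ 2 * (⨆ y, g y)⁻¹ := by
  have : Nonempty ι := ⟨i⟩
  have hsup : 0 < ⨆ y, g y := hi.trans_le (le_ciSup hg i)
  obtain ⟨x, hx⟩ := exists_lt_of_lt_ciSup (half_lt_self hsup)
  exact ⟨x, by simpa [inv_div, div_eq_mul_inv] using inv_anti₀ (half_pos hsup) hx.le⟩

section Words

variable {ℓ d : ℕ} {Z : Set (Euc d)} {f : Fin ℓ → Euc d → Euc d} {Df : Fin ℓ → Euc d → Mat d}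

lemma Zfun_le_pow_div_svf (w : List (Fin ℓ)) {r : ℝ} (hr : 0 ≤ r) (x : Seq ℓ) (m : Fin (d + 1)) :
    Zfun f Df w r ≤ r ^ (m : ℕ) / svf ((m : ℕ) : ℝ) (wordDeriv f Df w (codingMap f x)) := by
  have hnn : ∀ (y : Seq ℓ) (k : Fin (d + 1)),
      0 ≤ r ^ (k : ℕ) / svf ((k : ℕ) : ℝ) (wordDeriv f Df w (codingMap f y)) :=
    fun y k => div_nonneg (pow_nonneg hr _) (svf_nonneg _ _)
  exact (ciInf_le ⟨0, forall_mem_range.2 fun y => Real.iInf_nonneg (hnn y)⟩ x).trans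
    (ciInf_le (Finite.bddBelow_range _) m)

lemma wordComp_mapsTo (hf : ∀ i, MapsTo (f i) Z Z) (w : List (Fin ℓ)) :
    MapsTo (wordComp f w) Z Z := by
  induction w with
  | nil => exact mapsTo_id Z
  | cons i w ih => exact (hf i).comp ih

lemma opNorm_wordDeriv_le_one (hf : ∀ i, MapsTo (f i) Z Z)
    (hDf : ∀ i, ∀ y ∈ Z, opNorm (Df i y) ≤ 1) (w : List (Fin ℓ)) {y : Euc d} (hy : y ∈ Z) :
    opNorm (wordDeriv f Df w y) ≤ 1 := by
  induction w with
  | nil => exact opNorm_one_le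
  | cons i w ih =>
    calc opNorm (wordDeriv f Df (i :: w) y)
        ≤ opNorm (Df i (wordComp f w y)) * opNorm (wordDeriv f Df w y) := opNorm_mul_le _ _
      _ ≤ 1 * 1 := mul_le_mul (hDf i _ (wordComp_mapsTo hf w hy)) ih (norm_nonneg _) zero_le_one
      _ = 1 := one_mul 1

lemma det_wordDeriv_ne_zero (hf : ∀ i, MapsTo (f i) Z Z) (hDf : ∀ i, ∀ y ∈ Z, (Df i y).det ≠ 0)
    (w : List (Fin ℓ)) {y : Euc d} (hy : y ∈ Z) : (wordDeriv f Df w y).det ≠ 0 := by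
  induction w with
  | nil => simp [wordDeriv]
  | cons i w ih =>
    rw [wordDeriv, Matrix.det_mul]
    exact mul_ne_zero (hDf i _ (wordComp_mapsTo hf w hy)) ih

end Words

namespace IsC1IFS

variable {ℓ d : ℕ} {Z U : Set (Euc d)} {f : Fin ℓ → Euc d → Euc d} {Df : Fin ℓ → Euc d → Mat d}

lemma mapsTo (h : IsC1IFS Z U f Df) (i : Fin ℓ) : MapsTo (f i) Z Z := (h.2.2.2.2 i).1

lemma det_ne_zero (h : IsC1IFS Z U f Df) (i : Fin ℓ) {y : Euc d} (hy : y ∈ Z) :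
    (Df i y).det ≠ 0 :=
  ((h.2.2.2.2 i).2.2.2.2.2.1 y (h.2.2.2.1 hy)).ne_zero

lemma opNorm_le_one (h : IsC1IFS Z U f Df) (i : Fin ℓ) {y : Euc d} (hy : y ∈ Z) :
    opNorm (Df i y) ≤ 1 := by
  obtain ⟨ρ, hρ, hle⟩ := (h.2.2.2.2 i).2.2.2.2.2.2
  exact (hle y (h.2.2.2.1 hy)).trans hρ.le

end IsC1IFS

theorem energy_integral_bound_of_GTC_general
    {d ℓ : ℕ}
    {Ω : Type*} [MetricSpace Ω]
    [MeasurableSpace Ω] [BorelSpace Ω]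
    (η : Measure Ω)
    (Z U : Set (Euc d))
    (F : Ω → Fin ℓ → Euc d → Euc d) (DF : Ω → Fin ℓ → Euc d → Mat d)
    (hIFS : ∀ t, IsC1IFS Z U (F t) (DF t))
    (hPi : ∀ t (x : Seq ℓ), codingMap (F t) x ∈ Z ∧
      Tendsto (fun n => wordComp (F t) (prefixWord x n) (0 : Euc d)) atTop
        (𝓝 (codingMap (F t) x)))
    (δ₀ : ℝ) (ψ : ℝ → ℝ)
    (hGTC : GTCWith F DF Set.univ η δ₀ ψ)
    (s : ℝ) (hs : 0 < s) (hsd : s < d) (hsni : ∀ k : ℤ, s ≠ (k : ℝ))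
    (t₀ : Ω) (δ : ℝ) (hδ : δ ∈ Ioo (0 : ℝ) δ₀) :
    ∃ c : ℝ, 0 < c ∧ ∀ i j : Seq ℓ, i ≠ j →
      (∫⁻ t in closedBall t₀ δ,
          edist (codingMap (F t) i) (codingMap (F t) j) ^ (-s) ∂η) ≤
        ENNReal.ofReal (c * Real.exp ((commonLen i j : ℝ) * ψ δ) *
          (⨆ x : Seq ℓ,
            svf s (wordDeriv (F t₀) (DF t₀) (commonWord i j) (codingMap (F t₀) x)))⁻¹) := by
  obtain ⟨C, hC, hmeas⟩ := hGTC.2.2.2 t₀ (mem_univ t₀) δ hδ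
  have hks : (⌊s⌋₊ : ℝ) < s := (Nat.floor_le hs.le).lt_of_ne fun h => hsni ⌊s⌋₊ (by simp [h])
  have hK := dyadicConst_pos hks (Nat.lt_floor_add_one s)
  refine ⟨2 * C * dyadicConst ⌊s⌋₊ (⌊s⌋₊ + 1) s, by positivity, fun i j hij => ?_⟩
  set A : Seq ℓ → Mat d := fun x =>
    wordDeriv (F t₀) (DF t₀) (commonWord i j) (codingMap (F t₀) x)
  have hdet : ∀ x, (A x).det ≠ 0 := fun x =>
    det_wordDeriv_ne_zero (hIFS t₀).mapsTo (fun i _ => (hIFS t₀).det_ne_zero i) _ (hPi t₀ x).1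
  have hbdd : BddAbove (range fun x => svf s (A x)) := ⟨1, forall_mem_range.2 fun x =>
    svf_le_one hs.le (opNorm_wordDeriv_le_one (hIFS t₀).mapsTo
      (fun i _ => (hIFS t₀).opNorm_le_one i) _ (hPi t₀ x).1)⟩
  obtain ⟨x, hx⟩ := exists_inv_le_two_mul_inv_ciSup hbdd (svf_pos (hdet i) s)
  set e := Real.exp (commonLen i j * ψ δ)
  have hμ : ∀ m : ℕ, m ≤ d → ∀ r, 0 < r →
      η.restrict (closedBall t₀ δ) {t | dist (codingMap (F t) i) (codingMap (F t) j) < r} ≤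
        ENNReal.ofReal (C * e * (r ^ m / svf m (A x))) := fun m hm r hr => by
    rw [Measure.restrict_apply' measurableSet_closedBall, inter_comm]
    exact (hmeas i j hij r hr).trans <| ENNReal.ofReal_le_ofReal <| mul_le_mul_of_nonneg_left
      (Zfun_le_pow_div_svf _ hr.le x ⟨m, Nat.lt_succ_of_le hm⟩) (by positivity)
  simp only [edist_dist]
  refine (lintegral_rpow_neg_le_div_svf _ _ (hdet x) hks (Nat.lt_floor_add_one s) hsd
    (by positivity) hμ).trans (ENNReal.ofReal_le_ofReal ?_)
  calc C * e * dyadicConst ⌊s⌋₊ (⌊s⌋₊ + 1) s / svf s (A x)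
      = C * dyadicConst ⌊s⌋₊ (⌊s⌋₊ + 1) s * e * (svf s (A x))⁻¹ := by ring
    _ ≤ C * dyadicConst ⌊s⌋₊ (⌊s⌋₊ + 1) s * e * (2 * (⨆ x, svf s (A x))⁻¹) := by gcongr
    _ = _ := by ring

/-- Lemma 3.2: under the GTC (with constants `δ₀, ψ`), for
non-integral `0 < s < d`, `t₀ ∈ Ω` and `0 < δ < δ₀`, there is `c > 0` (depending on
`s`, `δ` and `t₀`) such that for all distinct `i, j ∈ Σ`,
`∫_{B(t₀,δ)} |Π^t(i) − Π^t(j)|^{-s} dη(t)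
   ≤ c e^{|i∧j| ψ(δ)} (max_{x ∈ Σ} φ^s(D_{Π^{t₀} x} f^{t₀}_{i∧j}))^{-1}`. -/
theorem energy_integral_bound_of_GTC
    {d ℓ : ℕ} (hd : 0 < d) (hℓ : 2 ≤ ℓ)
    {Ω : Type*} [MetricSpace Ω] [TopologicalSpace.SeparableSpace Ω]
    [MeasurableSpace Ω] [BorelSpace Ω]
    (η : Measure Ω) [IsLocallyFiniteMeasure η]
    (Z U : Set (Euc d))
    (F : Ω → Fin ℓ → Euc d → Euc d) (DF : Ω → Fin ℓ → Euc d → Mat d)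
    (hIFS : ∀ t, IsC1IFS Z U (F t) (DF t))
    (θ : ℝ) (hθ : θ ∈ Ioo (0 : ℝ) 1)
    (hC1 : ∀ t i, ∀ x ∈ Z, ∀ y ∈ Z, dist (F t i x) (F t i y) ≤ θ * dist x y)
    (hC2 : ∀ (i : Fin ℓ), ∀ x ∈ Z, Continuous fun t => F t i x)
    (hPi : ∀ t (x : Seq ℓ), codingMap (F t) x ∈ Z ∧
      Tendsto (fun n => wordComp (F t) (prefixWord x n) (0 : Euc d)) atTop
        (𝓝 (codingMap (F t) x)))
    (δ₀ : ℝ) (ψ : ℝ → ℝ)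
    (hGTC : GTCWith F DF Set.univ η δ₀ ψ)
    (s : ℝ) (hs : 0 < s) (hsd : s < d) (hsni : ∀ k : ℤ, s ≠ (k : ℝ))
    (t₀ : Ω) (δ : ℝ) (hδ : δ ∈ Ioo (0 : ℝ) δ₀) :
    ∃ c : ℝ, 0 < c ∧ ∀ i j : Seq ℓ, i ≠ j →
      (∫⁻ t in closedBall t₀ δ,
          edist (codingMap (F t) i) (codingMap (F t) j) ^ (-s) ∂η) ≤
        ENNReal.ofReal (c * Real.exp ((commonLen i j : ℝ) * ψ δ) *
          (⨆ x : Seq ℓ,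
            svf s (wordDeriv (F t₀) (DF t₀) (commonWord i j) (codingMap (F t₀) x)))⁻¹) :=
  energy_integral_bound_of_GTC_general η Z U F DF hIFS hPi δ₀ ψ hGTC s hs hsd hsni t₀ δ hδ
end IFSPaper
end
end

section
/- Let c ≥ 1, d ∈ ℕ, and let A be a real d×d non-singular lower triangular matrix such that |A_{ij}| ≤ c|A_{jj}| for all 1 ≤ i,j ≤ d. Then the inverse satisfies |(A^{−1})_{ij}| ≤ (c√d)^{d−1} |(A^{−1})_{ii}| for all 1 ≤ i,j ≤ d. -/
open scoped Matrix
open Finset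

noncomputable section

/-- Lemma 4.3: if `A` is a real non-singular lower triangular `d×d`
matrix with `|A_{ij}| ≤ c |A_{jj}|` for all `i, j` (where `c ≥ 1`), then
`|(A⁻¹)_{ij}| ≤ (c√d)^{d-1} |(A⁻¹)_{ii}|` for all `i, j`. -/
theorem inverse_entries_bound_of_lower_triangular
    {d : ℕ} (c : ℝ) (hc : 1 ≤ c)
    (A : Matrix (Fin d) (Fin d) ℝ)
    (hA : IsUnit A.det)
    (hlow : ∀ i j : Fin d, i < j → A i j = 0)
    (hbd : ∀ i j : Fin d, |A i j| ≤ c * |A j j|) :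
    ∀ i j : Fin d, |A⁻¹ i j| ≤ (c * Real.sqrt d) ^ (d - 1) * |A⁻¹ i i| := by
  intro i j
  have hd1 : (1:ℕ) ≤ d := i.pos.nat_succ_le -- d ≥ 1 since Fin d inhabited
  have hsq1 : (1:ℝ) ≤ Real.sqrt d := by
    rw [show (1:ℝ) = Real.sqrt 1 by simp]
    exact Real.sqrt_le_sqrt (by exact_mod_cast hd1)
  have hcs1 : (1:ℝ) ≤ c * Real.sqrt d := one_le_mul_of_one_le_of_one_le hc hsq1
  have hpow1 : (1:ℝ) ≤ (c * Real.sqrt d) ^ (d - 1) := one_le_pow₀ hcs1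
  -- block triangularity
  have hbt : A.BlockTriangular OrderDual.toDual := fun a b h => hlow a b h
  haveI : Invertible A := A.invertibleOfIsUnitDet hA
  have hbti : A⁻¹.BlockTriangular OrderDual.toDual :=
    Matrix.blockTriangular_inv_of_blockTriangular hbt
  have hinvlow : ∀ a b : Fin d, a < b → A⁻¹ a b = 0 := fun a b h => hbti h
  -- diagonal nonzero
  have hdet : A.det = ∏ k, A k k := Matrix.det_of_lowerTriangular A hbt
  have hdiag : ∀ k : Fin d, A k k ≠ 0 := by
    intro k hk
    apply hA.ne_zero
    rw [hdet]
    exact Finset.prod_eq_zero (mem_univ k) hk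
  rcases lt_trichotomy i j with hij | hij | hij
  · rw [hinvlow i j hij, abs_zero]
    positivity
  · subst hij
    nlinarith [abs_nonneg (A⁻¹ i i)]
  · -- main case j < i
    -- key recursion: for k < i, |A⁻¹ i k| ≤ c * ∑_{Ioc k i} |A⁻¹ i l|
    have hrec : ∀ k : Fin d, k < i →
        |A⁻¹ i k| ≤ c * ∑ l ∈ Ioc k i, |A⁻¹ i l| := by
      intro k hk
      have h0 : ∑ l, A⁻¹ i l * A l k = 0 := by
        have := Matrix.nonsing_inv_mul A hA
        have := congrFun (congrFun this i) k
        simpa [Matrix.mul_apply, Matrix.one_apply, hk.ne'] using this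
      have hsub : ∑ l ∈ Icc k i, A⁻¹ i l * A l k = ∑ l, A⁻¹ i l * A l k := by
        apply Finset.sum_subset (subset_univ _)
        intro l _ hl
        rw [mem_Icc, not_and_or, not_le, not_le] at hl
        rcases hl with hl | hl
        · rw [hlow l k hl, mul_zero]
        · rw [hinvlow i l hl, zero_mul]
      have hins : A⁻¹ i k * A k k + ∑ l ∈ Ioc k i, A⁻¹ i l * A l k = 0 := by
        rw [← hsub] at h0
        rwa [Finset.Icc_eq_cons_Ioc hk.le, Finset.sum_cons] at h0
      have heq : A⁻¹ i k * A k k = -∑ l ∈ Ioc k i, A⁻¹ i l * A l k := by linarith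
      have habs : |A⁻¹ i k| * |A k k| ≤ (c * ∑ l ∈ Ioc k i, |A⁻¹ i l|) * |A k k| := by
        rw [← abs_mul, heq, abs_neg]
        calc |∑ l ∈ Ioc k i, A⁻¹ i l * A l k| ≤ ∑ l ∈ Ioc k i, |A⁻¹ i l * A l k| :=
              Finset.abs_sum_le_sum_abs _ _
          _ ≤ ∑ l ∈ Ioc k i, |A⁻¹ i l| * (c * |A k k|) := by
              apply Finset.sum_le_sum
              intro l _
              rw [abs_mul]
              exact mul_le_mul_of_nonneg_left (hbd l k) (abs_nonneg _)
          _ = (c * ∑ l ∈ Ioc k i, |A⁻¹ i l|) * |A k k| := by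
              simp only [Finset.sum_mul, Finset.mul_sum]
              exact Finset.sum_congr rfl fun l _ => by ring
      exact le_of_mul_le_mul_right habs (abs_pos.mpr (hdiag k))
    -- sum bound by induction
    have hS : ∀ t : ℕ, ∀ k : Fin d, k ≤ i → i.val - k.val = t →
        ∑ l ∈ Icc k i, |A⁻¹ i l| ≤ (1 + c) ^ t * |A⁻¹ i i| := by
      intro t
      induction t with
      | zero =>
        intro k hk ht
        have : k = i := le_antisymm hk (by omega)
        subst this
        simp
      | succ t ih =>
        intro k hk ht
        have hki : k < i := by
          rcases lt_or_eq_of_le hk with h | h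
          · exact h
          · subst h; omega
        have hk1 : k.val + 1 < d := lt_of_le_of_lt (by omega) i.isLt
        set k' : Fin d := ⟨k.val + 1, hk1⟩ with hk'
        have hk'v : k'.val = k.val + 1 := rfl
        have hk'le : k' ≤ i := by
          rw [Fin.le_def]; omega
        have hIoc : Ioc k i = Icc k' i := by
          ext l
          simp only [mem_Ioc, mem_Icc, Fin.lt_def, Fin.le_def]
          omega
        have hih := ih k' hk'le (by omega)
        have hrk := hrec k hki
        rw [hIoc] at hrk
        calc ∑ l ∈ Icc k i, |A⁻¹ i l|
            = |A⁻¹ i k| + ∑ l ∈ Icc k' i, |A⁻¹ i l| := by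
              rw [Finset.Icc_eq_cons_Ioc hki.le, Finset.sum_cons, hIoc]
          _ ≤ c * ∑ l ∈ Icc k' i, |A⁻¹ i l| + ∑ l ∈ Icc k' i, |A⁻¹ i l| := by linarith
          _ = (1 + c) * ∑ l ∈ Icc k' i, |A⁻¹ i l| := by ring
          _ ≤ (1 + c) * ((1 + c) ^ t * |A⁻¹ i i|) := by
              apply mul_le_mul_of_nonneg_left hih (by linarith)
          _ = (1 + c) ^ (t + 1) * |A⁻¹ i i| := by ring
    -- assemble
    have hj1 : j.val + 1 < d := lt_of_le_of_lt (by omega) i.isLt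
    set j' : Fin d := ⟨j.val + 1, hj1⟩ with hj'
    have hj'v : j'.val = j.val + 1 := rfl
    have hIoc : Ioc j i = Icc j' i := by
      ext l
      simp only [mem_Ioc, mem_Icc, Fin.lt_def, Fin.le_def]
      omega
    have hj'le : j' ≤ i := by rw [Fin.le_def]; omega
    set m : ℕ := i.val - j.val - 1 with hm
    have hSm := hS m j' hj'le (by simp [hj']; omega)
    have hrj := hrec j hij
    rw [hIoc] at hrj
    have hmain : |A⁻¹ i j| ≤ c * (1 + c) ^ m * |A⁻¹ i i| := by
      calc |A⁻¹ i j| ≤ c * ∑ l ∈ Icc j' i, |A⁻¹ i l| := hrj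
        _ ≤ c * ((1 + c) ^ m * |A⁻¹ i i|) :=
            mul_le_mul_of_nonneg_left hSm (by linarith)
        _ = c * (1 + c) ^ m * |A⁻¹ i i| := by ring
    -- final arithmetic: c * (1+c)^m ≤ (c √d)^(d-1), with m ≤ d - 2, d ≥ 2
    have hd2 : 2 ≤ d := by omega
    have hm2 : m ≤ d - 2 := by omega
    have harith : c * (1 + c) ^ m ≤ (c * Real.sqrt d) ^ (d - 1) := by
      have h2c : (1 + c) ≤ 2 * c := by linarith
      have hcpos : (0:ℝ) < c := by linarith
      have step1 : c * (1 + c) ^ m ≤ c * (2 * c) ^ m := by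
        apply mul_le_mul_of_nonneg_left _ (le_of_lt hcpos)
        exact pow_le_pow_left₀ (by linarith) h2c m
      have step2 : c * (2 * c) ^ m = 2 ^ m * c ^ (m + 1) := by
        rw [mul_pow]; ring
      have hcmono : c ^ (m + 1) ≤ c ^ (d - 1) := pow_le_pow_right₀ hc (by omega)
      have h2mono : (2:ℝ) ^ m ≤ 2 ^ (d - 2) := pow_le_pow_right₀ one_le_two hm2
      have key : (2:ℝ) ^ (d - 2) ≤ Real.sqrt d ^ (d - 1) := by
        rcases le_or_gt 4 d with h4 | h4
        · have : (2:ℝ) ≤ Real.sqrt d := by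
            rw [show (2:ℝ) = Real.sqrt 4 by
              rw [show (4:ℝ) = 2^2 by norm_num, Real.sqrt_sq (by norm_num)]]
            exact Real.sqrt_le_sqrt (by exact_mod_cast h4)
          calc (2:ℝ) ^ (d - 2) ≤ 2 ^ (d - 1) := pow_le_pow_right₀ one_le_two (by omega)
            _ ≤ Real.sqrt d ^ (d - 1) := pow_le_pow_left₀ (by norm_num) this _
        · have hd23 : d = 2 ∨ d = 3 := by omega
          rcases hd23 with h | h <;> subst h
          · norm_num
          · have h3 : Real.sqrt ((3:ℕ):ℝ) ^ 2 = ((3:ℕ):ℝ) := Real.sq_sqrt (by positivity)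
            norm_num at h3 ⊢
      calc c * (1 + c) ^ m ≤ 2 ^ m * c ^ (m + 1) := by rw [← step2]; exact step1
        _ ≤ 2 ^ (d - 2) * c ^ (d - 1) := by
            apply mul_le_mul h2mono hcmono (by positivity) (by positivity)
        _ ≤ Real.sqrt d ^ (d - 1) * c ^ (d - 1) := by
            apply mul_le_mul_of_nonneg_right key (by positivity)
        _ = (c * Real.sqrt d) ^ (d - 1) := by rw [mul_pow]; ring
    calc |A⁻¹ i j| ≤ c * (1 + c) ^ m * |A⁻¹ i i| := hmain
      _ ≤ (c * Real.sqrt d) ^ (d - 1) * |A⁻¹ i i| :=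
          mul_le_mul_of_nonneg_right harith (abs_nonneg _)
end
end

section
/- Let c ≥ 1 and d ∈ ℕ, and let 𝓣_c(d) denote the set of real d×d lower triangular matrices A = (a_{ij}) such that |a_{11}| ≥ |a_{22}| ≥ … ≥ |a_{dd}| > 0 and |a_{ij}| ≤ c|a_{jj}| for all 1 ≤ i,j ≤ d. Then for every n ∈ ℕ and all A_1,…,A_n ∈ 𝓣_c(d), and all indices 1 ≤ j ≤ i ≤ d, the product satisfies |(A_1⋯A_n)_{ij}| ≤ (cn)^{i−j} |(A_1⋯A_n)_{jj}|. -/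
open scoped Matrix

noncomputable section

/-- Membership in the class `𝓣_c(d)` : real `d×d` lower triangular matrices whose
diagonal entries are nonzero and decreasing in absolute value, and whose entries
satisfy `|a_{ij}| ≤ c |a_{jj}|`. -/
def MemTc {d : ℕ} (c : ℝ) (A : Matrix (Fin d) (Fin d) ℝ) : Prop :=
  (∀ i j : Fin d, i < j → A i j = 0) ∧
  (∀ i j : Fin d, i ≤ j → |A j j| ≤ |A i i|) ∧
  (∀ i : Fin d, 0 < |A i i|) ∧
  (∀ i j : Fin d, |A i j| ≤ c * |A j j|)

/-!
Induct on the number of factors, peeling off the first one: for `A ∈ 𝓣_c(d)` and a lower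
triangular `P` with `|P_{lj}| ≤ r^{l-j} |P_{jj}|`, expand `(AP)_{ij} = ∑_{j ≤ l ≤ i} a_{il} P_{lj}`.
The term `l = i` is at most `|a_{jj}| r^{i-j} |P_{jj}|` and each term `l < i` at most
`c |a_{jj}| r^{l-j} |P_{jj}|`, so, as diagonals of triangular matrices multiply,
`|(AP)_{ij}| ≤ (r^k + c ∑_{t<k} r^t) |(AP)_{jj}| ≤ (r + c)^k |(AP)_{jj}|` with `k = i - j`.
Starting from `r = 0` for the empty product, the rate after `n` factors is `cn`.
-/

open Finset Matrix OrderDual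

theorem pow_add_mul_sum_range_pow_le_add_pow {R : Type*} [CommRing R] [LinearOrder R]
    [IsStrictOrderedRing R] {y c : R} (hy : 0 ≤ y) (hc : 0 ≤ c)
    (hyc : 1 ≤ y + c) (k : ℕ) :
    y ^ k + c * ∑ t ∈ range k, y ^ t ≤ (y + c) ^ k := by
  induction k with
  | zero => simp
  | succ k ih =>
    have hsum : 0 ≤ c * ∑ t ∈ range k, y ^ t := by positivity
    rw [sum_range_succ, pow_succ, pow_succ]
    nlinarith [mul_le_mul_of_nonneg_left ih (hy.trans (le_add_of_nonneg_right hc))]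

theorem Fin.sum_Ico_sub_eq_sum_range {M : Type*} [AddCommMonoid M] {d : ℕ} (f : ℕ → M)
    (j i : Fin d) : ∑ l ∈ Ico j i, f ((l : ℕ) - j) = ∑ t ∈ range ((i : ℕ) - j), f t := by
  have h := sum_map (Ico j i) Fin.valEmbedding (fun l => f (l - j))
  rw [Fin.map_valEmbedding_Ico, sum_Ico_eq_sum_range] at h
  simpa only [Nat.add_sub_cancel_left, Fin.valEmbedding_apply] using h.symm

namespace Matrix

variable {m α R : Type*} [Fintype m]

theorem BlockTriangular.mul_apply_self_of_injective [LinearOrder α] [NonUnitalNonAssocSemiring R]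
    {b : m → α} (hb : Function.Injective b) {M N : Matrix m m R} (hM : M.BlockTriangular b)
    (hN : N.BlockTriangular b) (i : m) : (M * N) i i = M i i * N i i := by
  rw [mul_apply]
  refine Fintype.sum_eq_single i fun k hk => ?_
  rcases lt_or_gt_of_ne (hb.ne hk) with hki | hik
  · rw [hM hki, zero_mul]
  · rw [hN hik, mul_zero]

theorem mul_apply_eq_sum_Icc_of_lowerTriangular [LinearOrder m] [LocallyFiniteOrder m]
    [NonUnitalNonAssocSemiring R] {M N : Matrix m m R} (hM : M.BlockTriangular toDual)
    (hN : N.BlockTriangular toDual) (i j : m) :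
    (M * N) i j = ∑ l ∈ Icc j i, M i l * N l j := by
  rw [mul_apply]
  refine (sum_subset (subset_univ _) fun l _ hl => ?_).symm
  rcases not_and_or.mp (mem_Icc.not.mp hl) with hjl | hli
  · rw [hN (toDual_lt_toDual.mpr (not_le.mp hjl)), mul_zero]
  · rw [hM (toDual_lt_toDual.mpr (not_le.mp hli)), zero_mul]

end Matrix

variable {d : ℕ} {c : ℝ} {A : Matrix (Fin d) (Fin d) ℝ}

theorem MemTc.blockTriangular (hA : MemTc c A) : A.BlockTriangular toDual :=
  fun _ _ h => hA.1 _ _ h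

theorem MemTc.abs_mul_apply_le {r : ℝ} (hc : 0 ≤ c) (hr : 0 ≤ r) (hrc : 1 ≤ r + c)
    (hA : MemTc c A) {P : Matrix (Fin d) (Fin d) ℝ} (hP : P.BlockTriangular toDual)
    (hPb : ∀ l j : Fin d, j ≤ l → |P l j| ≤ r ^ ((l : ℕ) - j) * |P j j|)
    {i j : Fin d} (hji : j ≤ i) :
    |(A * P) i j| ≤ (r + c) ^ ((i : ℕ) - j) * |(A * P) j j| := by
  have hAlow := hA.blockTriangular
  obtain ⟨-, hAdiag, -, hAbound⟩ := hA
  have hterm : ∀ l ∈ Ico j i, |A i l * P l j| ≤ c * r ^ ((l : ℕ) - j) * (|A j j| * |P j j|) := by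
    intro l hl
    have hAil : |A i l| ≤ c * |A j j| :=
      (hAbound i l).trans (mul_le_mul_of_nonneg_left (hAdiag j l (mem_Ico.mp hl).1) hc)
    calc |A i l * P l j| = |A i l| * |P l j| := abs_mul _ _
      _ ≤ c * |A j j| * (r ^ ((l : ℕ) - j) * |P j j|) :=
        mul_le_mul hAil (hPb l j (mem_Ico.mp hl).1) (abs_nonneg _) (by positivity)
      _ = _ := by ring
  calc |(A * P) i j| = |A i i * P i j + ∑ l ∈ Ico j i, A i l * P l j| := by
        rw [mul_apply_eq_sum_Icc_of_lowerTriangular hAlow hP,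
          ← Ico_insert_right hji, sum_insert right_notMem_Ico]
    _ ≤ |A i i| * |P i j| + ∑ l ∈ Ico j i, |A i l * P l j| :=
        (abs_add_le _ _).trans (add_le_add (abs_mul _ _).le (abs_sum_le_sum_abs _ _))
    _ ≤ |A j j| * (r ^ ((i : ℕ) - j) * |P j j|)
          + ∑ l ∈ Ico j i, c * r ^ ((l : ℕ) - j) * (|A j j| * |P j j|) := by
        gcongr ?_ + ?_
        · exact mul_le_mul (hAdiag j i hji) (hPb i j hji) (abs_nonneg _) (abs_nonneg _)
        · exact sum_le_sum hterm
    _ = (r ^ ((i : ℕ) - j) + c * ∑ t ∈ range ((i : ℕ) - j), r ^ t) * (|A j j| * |P j j|) := by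
        rw [← sum_mul, ← mul_sum, Fin.sum_Ico_sub_eq_sum_range (r ^ ·)]
        ring
    _ ≤ (r + c) ^ ((i : ℕ) - j) * (|A j j| * |P j j|) := by
        gcongr
        exact pow_add_mul_sum_range_pow_le_add_pow hr hc hrc _
    _ = (r + c) ^ ((i : ℕ) - j) * |(A * P) j j| := by
        rw [BlockTriangular.mul_apply_self_of_injective toDual.injective hAlow hP,
          abs_mul]

theorem product_entries_bound_of_Tc_general
    {d : ℕ} (c : ℝ) (hc : 1 ≤ c)
    (L : List (Matrix (Fin d) (Fin d) ℝ))
    (hL : ∀ A ∈ L, MemTc c A) :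
    ∀ i j : Fin d, j ≤ i →
      |L.prod i j| ≤ (c * L.length) ^ ((i : ℕ) - (j : ℕ)) * |L.prod j j| := by
  induction L with
  | nil =>
    intro i j _
    rcases eq_or_ne i j with rfl | hij
    · simp
    · simp [one_apply_ne hij]
  | cons A M ih =>
    intro i j hji
    have hM : ∀ B ∈ M, MemTc c B := fun B hB => hL B (List.mem_cons_of_mem _ hB)
    have hP : M.prod.BlockTriangular toDual :=
      Subsemiring.list_prod_mem (s := blockTriangularSubsemiring ℝ toDual)
        fun B hB => (hM B hB).blockTriangular
    have hlen : c * ((A :: M).length : ℝ) = c * M.length + c := by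
      push_cast [List.length_cons]; ring
    rw [List.prod_cons, hlen]
    exact (hL A List.mem_cons_self).abs_mul_apply_le (by linarith) (by positivity)
      (by nlinarith [M.length.cast_nonneg (α := ℝ)]) hP (ih hM) hji

/-- Lemma 4.4: for `c ≥ 1`, `n ≥ 1` and `A₁, …, Aₙ ∈ 𝓣_c(d)`,
the ordered product satisfies `|(A₁⋯Aₙ)_{ij}| ≤ (cn)^{i-j} |(A₁⋯Aₙ)_{jj}|`
for all `1 ≤ j ≤ i ≤ d`. -/
theorem product_entries_bound_of_Tc
    {d : ℕ} (c : ℝ) (hc : 1 ≤ c)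
    (L : List (Matrix (Fin d) (Fin d) ℝ))
    (hL : ∀ A ∈ L, MemTc c A) (hn : L ≠ []) :
    ∀ i j : Fin d, j ≤ i →
      |L.prod i j| ≤ (c * L.length) ^ ((i : ℕ) - (j : ℕ)) * |L.prod j j| :=
  product_entries_bound_of_Tc_general c hc L hL
end
end
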